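/- arXiv:2108.05623 — 2 statements merged into one kernel-verified Lean document; each statement's English description precedes it below -/
import Mathlib

section
/- Let k = 2r+1 and S ≤ k, and N satisfy SN ≥ k. Then Σ_{z=0}^{S−1} C(P_{SN}(e_z))ᵀ S_Nᵀ S_N C(P_{SN}(e_z)) = I_{SN}, where e_z is the z-th canonical basis vector of ℝ^k. -/
open Matrix BigOperators

/-- Spectral norm (largest singular value) of a real matrix,
as the operator norm of the induced map between Euclidean spaces. -/
noncomputable def spec {m n : Type*} [Fintype m] [Fintype n] [DecidableEq n]
    (A : Matrix m n ℝ) : ℝ :=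
  ‖(Matrix.toEuclideanLin A).toContinuousLinearMap‖

/-- Squared Frobenius norm of a matrix. -/
def frob2 {m n : Type*} [Fintype m] [Fintype n] (A : Matrix m n ℝ) : ℝ :=
  ∑ i, ∑ j, (A i j) ^ 2

/-- The stride-`S` sampling matrix `S_N ∈ ℝ^{N×SN}`, `(S_N)_{i,j} = 1` iff `j = S·i`. -/
def samp (S N : ℕ) : Matrix (Fin N) (Fin (S * N)) ℝ :=
  Matrix.of fun i j => if (j : ℕ) = S * (i : ℕ) then 1 else 0

open Fin.IntCast in
/-- Circular embedding `P_n : ℝ^k → ℝ^n` (`k = 2r+1`): places `h j` at position `(r - j) mod n`,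
i.e. `[P_n(h)]_i = h_{r-i}` for `i ∈ [-r,r] mod n`, and `0` otherwise. -/
noncomputable def Pemb (r n : ℕ) [NeZero n] (h : Fin (2*r+1) → ℝ) : Fin n → ℝ :=
  fun i => ∑ j : Fin (2*r+1), if i = (((r : ℤ) - (j : ℤ) : ℤ) : Fin n) then h j else 0

/-- Layer transform matrix `𝒦 ∈ ℝ^{MN×CSN}` of a 1D circular strided convolutional layer
with kernel tensor `K ∈ ℝ^{M×C×k}`: block `(i,j)` is `S_N · C(P_{SN}(K_{i,j}))`. -/
noncomputable def layerMat (M C r S N : ℕ) [NeZero (S*N)]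
    (K : Fin M → Fin C → Fin (2*r+1) → ℝ) :
    Matrix (Fin M × Fin N) (Fin C × Fin (S*N)) ℝ :=
  Matrix.of fun p q =>
    (samp S N * Matrix.circulant (Pemb r (S*N) (K p.1 q.1))) p.2 q.2

/-- `conv(h,g, padding zero = P, stride = S) ∈ ℝ^{2P/S+1}` with `P = ⌊(k-1)/S⌋·S`, `k = 2r+1`:
the strided zero-padded cross-correlation of `h` and `g`. -/
noncomputable def convPS (r S : ℕ) (h g : Fin (2*r+1) → ℝ) :
    Fin (2*((2*r)/S)+1) → ℝ :=
  fun i => ∑ i' : Fin (2*r+1),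
    h i' *
      (if hd : ((2*r)/S)*S ≤ S * (i : ℕ) + (i' : ℕ) ∧
               S * (i : ℕ) + (i' : ℕ) ≤ ((2*r)/S)*S + 2*r
       then g ⟨S * (i : ℕ) + (i' : ℕ) - ((2*r)/S)*S, by omega⟩ else 0)

open Fin.IntCast in
/-- Circular embedding `Q_{S,N} : ℝ^{2q+1} → ℝ^N` (`q = P/S`): places `x j` at position
`(j - q) mod N`, so the central coordinate `x_q` sits at index `0`. -/
noncomputable def Qemb (q N : ℕ) [NeZero N] (x : Fin (2*q+1) → ℝ) : Fin N → ℝ :=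
  fun i => ∑ j : Fin (2*q+1), if i = (((j : ℤ) - (q : ℤ) : ℤ) : Fin N) then x j else 0

/-- `L_orth` raw sum: `‖CONV(K,K,padding = P, stride = S) − I_{r0}‖_F²`. -/
noncomputable def Lraw (M C r S : ℕ) (K : Fin M → Fin C → Fin (2*r+1) → ℝ) : ℝ :=
  ∑ m : Fin M, ∑ l : Fin M, ∑ t : Fin (2*((2*r)/S)+1),
    ((∑ c : Fin C, convPS r S (K m c) (K l c) t) -
      (if m = l ∧ (t : ℕ) = (2*r)/S then 1 else 0)) ^ 2

/-- `'valid'` boundary single-channel transform matrix `A_N(h) ∈ ℝ^{(N−k+1)×N}`. -/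
def validMat (r N : ℕ) (h : Fin (2*r+1) → ℝ) :
    Matrix (Fin (N - (2*r+1) + 1)) (Fin N) ℝ :=
  Matrix.of fun i j =>
    if hd : (i : ℕ) ≤ (j : ℕ) ∧ (j : ℕ) - (i : ℕ) ≤ 2*r
    then h ⟨(j : ℕ) - (i : ℕ), by omega⟩ else 0

/-- Zero-padding `'same'` single-channel transform matrix `A_N(h) ∈ ℝ^{N×N}`:
`A_N(h)_{i,j} = h_{j−i+r}` when `|j−i| ≤ r`, and `0` otherwise. -/
def sameMat (r N : ℕ) (h : Fin (2*r+1) → ℝ) : Matrix (Fin N) (Fin N) ℝ :=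
  Matrix.of fun i j =>
    if hd : (i : ℕ) ≤ (j : ℕ) + r ∧ (j : ℕ) ≤ (i : ℕ) + r
    then h ⟨(j : ℕ) + r - (i : ℕ), by omega⟩ else 0

open Fin.IntCast in
lemma fin_intCast_val (n : ℕ) [NeZero n] (a : ℤ) : (((a : Fin n) : ℕ) : ℤ) = a % n := by
  have hn : 0 < (n:ℤ) := by exact_mod_cast Nat.pos_of_ne_zero (NeZero.ne n)
  rw [Fin.val_intCast]
  exact Int.toNat_of_nonneg (Int.emod_nonneg a (by omega))

open Fin.IntCast in
lemma pemb_single (r n : ℕ) [NeZero n] (z : Fin (2*r+1)) (i : Fin n) :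
    Pemb r n (Pi.single z 1) i = if i = (((r:ℤ) - (z:ℤ) : ℤ) : Fin n) then 1 else 0 := by
  unfold Pemb
  rw [Finset.sum_eq_single z]
  · simp
  · intro j _ hj; simp [Pi.single_apply, hj]
  · simp

lemma int_dvd_emod_iff (s n a : ℤ) (h : s ∣ n) : s ∣ a % n ↔ s ∣ a := by
  have h2 := Int.emod_emod_of_dvd a h
  rw [Int.dvd_iff_emod_eq_zero, Int.dvd_iff_emod_eq_zero, h2]

lemma count_div (S : ℕ) (hS : 0 < S) (x r : ℕ) :
    ∑ z : Fin S, (if (S:ℤ) ∣ ((x : ℤ) + (r : ℤ) - ((z:ℕ):ℤ)) then (1:ℝ) else 0) = 1 := by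
  have hiff : ∀ z : Fin S, ((S:ℤ) ∣ ((x:ℤ) + (r:ℤ) - ((z:ℕ):ℤ))) ↔
      z = ⟨(x + r) % S, Nat.mod_lt _ hS⟩ := by
    intro z
    have hz : ((z:ℕ):ℤ) % S = ((z:ℕ):ℤ) :=
      Int.emod_eq_of_lt (by positivity) (by exact_mod_cast z.isLt)
    have hm : ((x:ℤ) + (r:ℤ)) % S = (((x + r) % S : ℕ) : ℤ) := by push_cast; ring
    rw [Int.dvd_iff_emod_eq_zero, ← Int.emod_eq_emod_iff_emod_sub_eq_zero, hz, hm,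
      Nat.cast_inj, Fin.ext_iff]
    exact eq_comm
  simp_rw [hiff]
  simp

lemma sum_samp_ind (S N : ℕ) (hS : 0 < S) (a b : ℕ) (ha : a < S*N) :
    ∑ i : Fin N, (if a = S*(i:ℕ) then (1:ℝ) else 0) * (if b = S*(i:ℕ) then (1:ℝ) else 0)
    = if a = b ∧ S ∣ a then 1 else 0 := by
  by_cases h : a = b ∧ S ∣ a
  · obtain ⟨rfl, k, hk⟩ := h
    have hkN : k < N := by
      subst hk
      exact Nat.lt_of_mul_lt_mul_left ha
    rw [if_pos ⟨rfl, k, hk⟩, Finset.sum_eq_single ⟨k, hkN⟩]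
    · simp [hk]
    · intro i _ hi
      have hne : a ≠ S*(i:ℕ) := by
        rintro h
        exact hi (Fin.ext (Nat.eq_of_mul_eq_mul_left hS (hk.symm.trans h)).symm)
      simp [hne]
    · simp
  · rw [if_neg h]
    apply Finset.sum_eq_zero
    intro i _
    by_cases h1 : a = S*(i:ℕ)
    · have h2 : b ≠ S*(i:ℕ) := fun hb => h ⟨h1.trans hb.symm, ⟨i, h1⟩⟩
      simp [h2]
    · simp [h1]

/-- for `S ≤ k = 2r+1` and `SN ≥ k`,
`Σ_{z=0}^{S−1} C(P_{SN}(e_z))ᵀ S_Nᵀ S_N C(P_{SN}(e_z)) = I_{SN}`. -/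
theorem stmt6 (r S N : ℕ) [NeZero (S*N)] (hS : S ≤ 2*r+1) (hk : 2*r+1 ≤ S*N) :
    ∑ z : Fin S,
      (Matrix.circulant (Pemb r (S*N) (Pi.single (Fin.castLE hS z) 1)))ᵀ *
        (samp S N)ᵀ * samp S N *
        Matrix.circulant (Pemb r (S*N) (Pi.single (Fin.castLE hS z) 1))
    = 1 := by
  have hSN : 0 < S*N := Nat.pos_of_ne_zero (NeZero.ne _)
  have hSpos : 0 < S := Nat.pos_of_ne_zero (by rintro rfl; simp at hSN)
  have hSn : (S:ℤ) ∣ ((S*N : ℕ) : ℤ) := by push_cast; exact Dvd.intro _ rfl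
  have key : ∀ z : Fin S,
      (Matrix.circulant (Pemb r (S*N) (Pi.single (Fin.castLE hS z) 1)))ᵀ *
        (samp S N)ᵀ * samp S N *
        Matrix.circulant (Pemb r (S*N) (Pi.single (Fin.castLE hS z) 1))
      = Matrix.diagonal (fun x : Fin (S*N) =>
          if (S:ℤ) ∣ (((x:ℕ):ℤ) + (r:ℤ) - ((z:ℕ):ℤ)) then (1:ℝ) else 0) := by
    intro z
    open Fin.IntCast in set p : Fin (S*N) := (((r : ℤ) - ((z:ℕ):ℤ) : ℤ) : Fin (S*N)) with hp
    have hC : Matrix.circulant (Pemb r (S*N) (Pi.single (Fin.castLE hS z) 1))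
        = Matrix.of (fun x y : Fin (S*N) => if x = p + y then (1:ℝ) else 0) := by
      ext x y
      rw [Matrix.circulant_apply, pemb_single]
      have hcz : ((Fin.castLE hS z : Fin (2*r+1)) : ℤ) = ((z:ℕ):ℤ) := by simp
      rw [hcz, Matrix.of_apply]
      simp only [sub_eq_iff_eq_add]
      rw [hp]
    rw [hC, ← Matrix.transpose_mul, Matrix.mul_assoc]
    have hMC : samp S N * Matrix.of (fun x y : Fin (S*N) => if x = p + y then (1:ℝ) else 0)
        = Matrix.of (fun (i : Fin N) (y : Fin (S*N)) =>
            if ((p + y : Fin (S*N)) : ℕ) = S*(i:ℕ) then (1:ℝ) else 0) := by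
      ext i y
      rw [Matrix.mul_apply, Finset.sum_eq_single (p + y)]
      · simp [samp]
      · intro j _ hj
        simp [hj]
      · simp
    rw [hMC]
    ext x y
    rw [Matrix.mul_apply]
    simp only [Matrix.transpose_apply, Matrix.of_apply]
    rw [sum_samp_ind S N hSpos _ _ (p + x).isLt]
    have h1 : (((p + x : Fin (S*N)) : ℕ) = ((p + y : Fin (S*N)) : ℕ)) ↔ x = y := by
      rw [← Fin.ext_iff, add_right_inj]
    have h2 : S ∣ ((p + x : Fin (S*N)) : ℕ) ↔ (S:ℤ) ∣ (((x:ℕ):ℤ) + (r:ℤ) - ((z:ℕ):ℤ)) := by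
      rw [← Int.natCast_dvd_natCast]
      have hval : (((p + x : Fin (S*N)) : ℕ) : ℤ)
          = ((((r:ℤ) - ((z:ℕ):ℤ)) % ((S*N : ℕ):ℤ)) + ((x:ℕ):ℤ)) % ((S*N : ℕ):ℤ) := by
        rw [Fin.val_add]
        push_cast [fin_intCast_val]
        rw [hp, fin_intCast_val]
        norm_cast
      rw [hval, Int.dvd_iff_emod_eq_zero, Int.emod_emod_of_dvd _ hSn, Int.add_emod,
        Int.emod_emod_of_dvd _ hSn, ← Int.add_emod, ← Int.dvd_iff_emod_eq_zero]
      have harith : ((r:ℤ) - ((z:ℕ):ℤ) + ((x:ℕ):ℤ)) = ((x:ℕ):ℤ) + (r:ℤ) - ((z:ℕ):ℤ) := by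
        ring
      rw [harith]
    by_cases hxy : x = y
    · subst hxy
      simp [Matrix.diagonal_apply_eq, h2]
    · have h1' : ¬ (((p + x : Fin (S*N)) : ℕ) = ((p + y : Fin (S*N)) : ℕ)) := fun h => hxy (h1.mp h)
      simp [Matrix.diagonal_apply_ne _ hxy, h1']
  simp_rw [key]
  ext x y
  rw [Matrix.sum_apply]
  by_cases hxy : x = y
  · subst hxy
    simp only [Matrix.diagonal_apply_eq]
    rw [count_div S hSpos (x:ℕ) r, Matrix.one_apply_eq]
  · simp [Matrix.diagonal_apply_ne _ hxy, Matrix.one_apply_ne hxy]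
end

section
/- (Scale invariance of the relative Frobenius orthogonality error, 1D.) Let K ∈ ℝ^{M×C×k}, k odd, and N, N' be sizes with SN ≥ 2k−1 and SN' ≥ 2k−1. Then (Err^{N'}_F(K))² = (N'/N) · (Err^N_F(K))², where Err^N_F(K) is the Frobenius norm of the orthogonality residual of the circular layer transform matrix of K at signal size parameter N. -/
open Matrix BigOperators

set_option maxHeartbeats 1000000

open Fin.CommRing

lemma finIntCast_eq_iff {n : ℕ} [NeZero n] (x y : ℤ) :
    ((x : Fin n) = (y : Fin n)) ↔ (n:ℤ) ∣ (x - y) := by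
  rw [CharP.intCast_eq_intCast (Fin n) n, Int.modEq_iff_dvd]
  exact dvd_sub_comm

lemma finIntCast_val_dvd {n : ℕ} [NeZero n] (x : ℤ) :
    (n:ℤ) ∣ ((((x : Fin n) : ℕ) : ℤ) - x) := by
  have h : (((((x : Fin n) : ℕ) : ℤ)) : Fin n) = (x : Fin n) := by
    push_cast [Fin.cast_val_eq_self]
    rfl
  exact (finIntCast_eq_iff _ _).1 h

lemma layerMat_apply (M C r S N : ℕ) [NeZero (S*N)]
    (K : Fin M → Fin C → Fin (2*r+1) → ℝ) (m : Fin M) (i : Fin N) (c : Fin C) (j : Fin (S*N)) :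
    layerMat M C r S N K (m, i) (c, j)
      = ∑ a : Fin (2*r+1),
          if ((S*(i:ℕ) + (a:ℕ) : ℤ) : Fin (S*N)) = (((j:ℕ) + (r:ℕ) : ℤ) : Fin (S*N))
          then K m c a else 0 := by
  have hS : S ≠ 0 := by rintro rfl; exact NeZero.ne (0*N) (zero_mul N)
  have hlt : S * (i:ℕ) < S * N :=
    (Nat.mul_lt_mul_left (Nat.pos_of_ne_zero hS)).mpr i.isLt
  set t₀ : Fin (S*N) := ⟨S*(i:ℕ), hlt⟩ with ht₀
  have key : layerMat M C r S N K (m, i) (c, j)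
      = Pemb r (S*N) (K m c) (t₀ - j) := by
    simp only [layerMat, Matrix.of_apply, Matrix.mul_apply, samp, Matrix.circulant_apply]
    rw [Finset.sum_eq_single t₀]
    · simp [ht₀]
    · intro b _ hb
      have : (b:ℕ) ≠ S * (i:ℕ) := fun h => hb (Fin.ext h)
      simp [this]
    · intro h; exact absurd (Finset.mem_univ _) h
  rw [key, Pemb]
  refine Finset.sum_congr rfl fun a _ => ?_
  have ht : t₀ = (((S*(i:ℕ) : ℕ) : ℤ) : Fin (S*N)) := by
    rw [Int.cast_natCast]
    exact (Fin.cast_val_eq_self t₀).symm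
  have hj : j = (((j:ℕ) : ℤ) : Fin (S*N)) := by
    rw [Int.cast_natCast]
    exact (Fin.cast_val_eq_self j).symm
  have e1 : t₀ - j = ((((S*(i:ℕ) : ℕ) : ℤ) - (((j:ℕ) : ℕ) : ℤ) : ℤ) : Fin (S*N)) := by
    rw [Int.cast_sub, ← ht, ← hj]
  have hcond : (t₀ - j = ((((r : ℤ) - ((a : ℤ)) : ℤ)) : Fin (S*N)))
      ↔ (((S*(i:ℕ) + (a:ℕ) : ℤ) : Fin (S*N)) = (((j:ℕ) + (r:ℕ) : ℤ) : Fin (S*N))) := by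
    rw [e1, finIntCast_eq_iff, finIntCast_eq_iff]
    constructor <;> (intro ⟨k, hk⟩; exact ⟨k, by push_cast at hk ⊢; linarith⟩)
  exact if_congr hcond rfl rfl

lemma finEqCast_iff {n : ℕ} [NeZero n] (j : Fin n) (y : ℤ) :
    j = (y : Fin n) ↔ (n:ℤ) ∣ (((j:ℕ) : ℤ) - y) := by
  have h : j = ((((j:ℕ):ℤ)) : Fin n) := by rw [Int.cast_natCast, Fin.cast_val_eq_self]
  conv_lhs => rw [h]
  rw [finIntCast_eq_iff]

lemma mulT_apply (M C r S N : ℕ) [NeZero (S*N)]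
    (K : Fin M → Fin C → Fin (2*r+1) → ℝ) (m l : Fin M) (i i' : Fin N) :
    (layerMat M C r S N K * (layerMat M C r S N K)ᵀ) (m,i) (l,i')
      = ∑ c : Fin C, ∑ a : Fin (2*r+1), ∑ b : Fin (2*r+1),
          if ((S*(i:ℕ) + (a:ℕ) : ℤ) : Fin (S*N)) = ((S*(i':ℕ) + (b:ℕ) : ℤ) : Fin (S*N))
          then K m c a * K l c b else 0 := by
  rw [Matrix.mul_apply, Fintype.sum_prod_type]
  refine Finset.sum_congr rfl fun c _ => ?_
  have hA : ∀ (ii : Fin N) (a : Fin (2*r+1)) (j : Fin (S*N)),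
      (((S*(ii:ℕ) + (a:ℕ) : ℤ) : Fin (S*N)) = (((j:ℕ) + (r:ℕ) : ℤ) : Fin (S*N)))
        ↔ j = (((S*(ii:ℕ) + (a:ℕ) - (r:ℕ) : ℤ)) : Fin (S*N)) := by
    intro ii a j
    rw [finIntCast_eq_iff, finEqCast_iff]
    constructor <;> (intro ⟨k, hk⟩; exact ⟨-k, by linarith⟩)
  calc ∑ j : Fin (S*N), layerMat M C r S N K (m,i) (c,j) *
          (layerMat M C r S N K)ᵀ (c,j) (l,i')
      = ∑ j : Fin (S*N),
          (∑ a : Fin (2*r+1), if j = (((S*(i:ℕ) + (a:ℕ) - (r:ℕ) : ℤ)) : Fin (S*N))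
              then K m c a else 0) *
          (∑ b : Fin (2*r+1), if j = (((S*(i':ℕ) + (b:ℕ) - (r:ℕ) : ℤ)) : Fin (S*N))
              then K l c b else 0) := by
        refine Finset.sum_congr rfl fun j _ => ?_
        rw [Matrix.transpose_apply, layerMat_apply, layerMat_apply]
        congr 1 <;> refine Finset.sum_congr rfl fun a _ => if_congr (hA _ _ _) rfl rfl
    _ = ∑ j : Fin (S*N), ∑ a : Fin (2*r+1), ∑ b : Fin (2*r+1),
          (if j = (((S*(i:ℕ) + (a:ℕ) - (r:ℕ) : ℤ)) : Fin (S*N)) then K m c a else 0) *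
          (if j = (((S*(i':ℕ) + (b:ℕ) - (r:ℕ) : ℤ)) : Fin (S*N)) then K l c b else 0) := by
        refine Finset.sum_congr rfl fun j _ => ?_
        rw [Finset.sum_mul_sum]
    _ = ∑ a : Fin (2*r+1), ∑ b : Fin (2*r+1), ∑ j : Fin (S*N),
          (if j = (((S*(i:ℕ) + (a:ℕ) - (r:ℕ) : ℤ)) : Fin (S*N)) then K m c a else 0) *
          (if j = (((S*(i':ℕ) + (b:ℕ) - (r:ℕ) : ℤ)) : Fin (S*N)) then K l c b else 0) := by
        rw [Finset.sum_comm]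
        refine Finset.sum_congr rfl fun a _ => Finset.sum_comm
    _ = ∑ a : Fin (2*r+1), ∑ b : Fin (2*r+1),
          if ((S*(i:ℕ) + (a:ℕ) : ℤ) : Fin (S*N)) = ((S*(i':ℕ) + (b:ℕ) : ℤ) : Fin (S*N))
          then K m c a * K l c b else 0 := by
        refine Finset.sum_congr rfl fun a _ => Finset.sum_congr rfl fun b _ => ?_
        simp only [ite_mul, mul_ite, zero_mul, mul_zero]
        rw [Finset.sum_ite_eq' Finset.univ]
        simp only [Finset.mem_univ, if_true]
        refine if_congr ?_ rfl rfl
        rw [finIntCast_eq_iff, finIntCast_eq_iff]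
        constructor <;> rintro ⟨k, hk⟩ <;>
          exact ⟨-k, by push_cast at hk ⊢; linear_combination -hk⟩

/-- Integer correlation of the kernels. -/
noncomputable def ECorr (M C r : ℕ) (K : Fin M → Fin C → Fin (2*r+1) → ℝ)
    (m l : Fin M) (t : ℤ) : ℝ :=
  ∑ c : Fin C, ∑ a : Fin (2*r+1), ∑ b : Fin (2*r+1),
    if (a:ℤ) - (b:ℤ) = t then K m c a * K l c b else 0

lemma GRO_val (M C r S N : ℕ) [NeZero (S*N)] [NeZero N] (hN : 4*r+1 ≤ S*N)
    (K : Fin M → Fin C → Fin (2*r+1) → ℝ) (m l : Fin M) (d : Fin N) :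
    ((layerMat M C r S N K * (layerMat M C r S N K)ᵀ - 1 :
        Matrix (Fin M × Fin N) (Fin M × Fin N) ℝ)) (m, (0 : Fin N)) (l, d)
      = (if S*(d:ℕ) ≤ 2*r then ECorr M C r K m l (S*(d:ℕ)) else 0)
        + (if 1 ≤ (d:ℕ) ∧ S*(N-(d:ℕ)) ≤ 2*r
            then ECorr M C r K m l ((S:ℤ)*(d:ℕ) - (S:ℤ)*(N:ℤ)) else 0)
        - (if m = l ∧ (d:ℕ) = 0 then 1 else 0) := by
  have hS : 0 < S := Nat.pos_of_ne_zero (fun h => NeZero.ne (S*N) (by rw [h, Nat.zero_mul]))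
  have hdN : (d:ℕ) ≤ N := le_of_lt d.isLt
  have hsplit : S*(d:ℕ) + S*(N-(d:ℕ)) = S*N := by
    rw [← Nat.mul_add]; congr 1; omega
  rw [Matrix.sub_apply, mulT_apply, Matrix.one_apply]
  have hone : ((m, (0:Fin N)) = (l, d)) ↔ (m = l ∧ (d:ℕ) = 0) := by
    rw [Prod.mk.injEq]
    constructor
    · rintro ⟨h1, h2⟩; exact ⟨h1, by rw [← h2]; rfl⟩
    · rintro ⟨h1, h2⟩; exact ⟨h1, Fin.ext (by simp [h2])⟩
  rw [if_congr hone rfl rfl]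
  congr 1
  -- main sum
  by_cases h1 : S*(d:ℕ) ≤ 2*r
  · -- condition ⟺ (a:ℤ) - b = S*d
    have hd2 : ¬ (1 ≤ (d:ℕ) ∧ S*(N-(d:ℕ)) ≤ 2*r) := by
      rintro ⟨hd1, hd2⟩; omega
    rw [if_pos h1, if_neg hd2, add_zero, ECorr]
    refine Finset.sum_congr rfl fun c _ => Finset.sum_congr rfl fun a _ =>
      Finset.sum_congr rfl fun b _ => if_congr ?_ rfl rfl
    rw [finIntCast_eq_iff]
    constructor
    · intro ⟨k, hk⟩
      have hx : ((S:ℤ)*((0:Fin N):ℕ) + (a:ℕ)) - ((S:ℤ)*((d:ℕ):ℤ) + (b:ℕ)) = 0 := by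
        refine Int.eq_zero_of_abs_lt_dvd ⟨k, hk⟩ ?_
        have ha := a.isLt; have hb := b.isLt
        have h0 : ((0:Fin N):ℕ) = 0 := rfl
        rw [abs_lt]
        push_cast [h0]
        constructor <;> nlinarith [hN, h1]
      have h0 : ((0:Fin N):ℕ) = 0 := rfl
      push_cast [h0] at hx ⊢
      linarith
    · intro hab
      exact ⟨0, by have h0 : ((0:Fin N):ℕ) = 0 := rfl; push_cast [h0] at hab ⊢; linarith⟩
  · by_cases h2 : 1 ≤ (d:ℕ) ∧ S*(N-(d:ℕ)) ≤ 2*r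
    · rw [if_neg h1, if_pos h2, zero_add, ECorr]
      refine Finset.sum_congr rfl fun c _ => Finset.sum_congr rfl fun a _ =>
        Finset.sum_congr rfl fun b _ => if_congr ?_ rfl rfl
      rw [finIntCast_eq_iff]
      have hsz : (S:ℤ)*((N:ℤ)-(d:ℕ)) = (S:ℤ)*(N:ℤ) - (S:ℤ)*(d:ℕ) := by ring
      have hsn : ((S*(N-(d:ℕ)) : ℕ) : ℤ) = (S:ℤ)*(N:ℤ) - (S:ℤ)*(d:ℕ) := by
        push_cast [Nat.cast_sub hdN]; ring
      constructor
      · intro ⟨k, hk⟩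
        have hx : (((S:ℤ)*((0:Fin N):ℕ) + (a:ℕ)) - ((S:ℤ)*((d:ℕ):ℤ) + (b:ℕ)))
            + (S:ℤ)*(N:ℤ) = 0 := by
          refine Int.eq_zero_of_abs_lt_dvd (m := (S:ℤ)*(N:ℤ)) ⟨k+1, ?_⟩ ?_
          · push_cast at hk ⊢; linear_combination hk
          · have ha := a.isLt; have hb := b.isLt
            have h0 : ((0:Fin N):ℕ) = 0 := rfl
            have h2' := h2.2
            rw [abs_lt]
            have : (S:ℤ)*(N:ℤ) - (S:ℤ)*(d:ℕ) ≤ 2*r := by rw [← hsn]; exact_mod_cast h2'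
            push_cast [h0]
            constructor <;> nlinarith [hN]
        have h0 : ((0:Fin N):ℕ) = 0 := rfl
        push_cast [h0] at hx ⊢
        linarith
      · intro hab
        refine ⟨-1, ?_⟩
        have h0 : ((0:Fin N):ℕ) = 0 := rfl
        push_cast [h0] at hab ⊢
        linarith
    · -- no solutions: sum is zero
      rw [if_neg h1, if_neg h2, add_zero]
      refine Finset.sum_eq_zero fun c _ => Finset.sum_eq_zero fun a _ =>
        Finset.sum_eq_zero fun b _ => ?_
      rw [if_neg]
      rw [finIntCast_eq_iff]
      rintro ⟨k, hk⟩
      have h0 : ((0:Fin N):ℕ) = 0 := rfl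
      have ha := a.isLt; have hb := b.isLt
      have hdlt := d.isLt
      -- x = a - (S d + b) = (S N) k ; bound: -2 S N < x < S N
      have hSN : (0:ℤ) < (S:ℤ)*(N:ℤ) := by
        have := Nat.pos_of_ne_zero (NeZero.ne (S*N)); exact_mod_cast this
      push_cast [h0] at hk
      rw [mul_zero, zero_add] at hk
      have hNc : (4*(r:ℤ)+1) ≤ (S:ℤ)*(N:ℤ) := by exact_mod_cast hN
      have ha' : ((a:ℕ):ℤ) ≤ 2*r := by exact_mod_cast Nat.lt_succ_iff.mp a.isLt
      have hb' : ((b:ℕ):ℤ) ≤ 2*r := by exact_mod_cast Nat.lt_succ_iff.mp b.isLt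
      have ha0 : (0:ℤ) ≤ ((a:ℕ):ℤ) := by positivity
      have hb0 : (0:ℤ) ≤ ((b:ℕ):ℤ) := by positivity
      have hsd0 : (0:ℤ) ≤ (S:ℤ)*(d:ℕ) := by positivity
      have hsd : (S:ℤ)*(d:ℕ) < (S:ℤ)*(N:ℤ) := by
        have : S*(d:ℕ) < S*N := (Nat.mul_lt_mul_left hS).mpr d.isLt
        exact_mod_cast this
      have hub : ((a:ℕ):ℤ) - ((S:ℤ)*(d:ℕ) + (b:ℕ)) < (S:ℤ)*(N:ℤ)*1 := by linarith
      have hlb : (S:ℤ)*(N:ℤ)*(-2) < ((a:ℕ):ℤ) - ((S:ℤ)*(d:ℕ) + (b:ℕ)) := by linarith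
      rw [hk] at hub hlb
      have hk1 : k < 1 := lt_of_mul_lt_mul_left hub hSN.le
      have hk2 : (-2:ℤ) < k := lt_of_mul_lt_mul_left hlb hSN.le
      have hk0 : k = 0 ∨ k = -1 := by omega
      rcases hk0 with rfl | rfl
      · -- then a - b = S d, so S d ≤ 2 r, contradiction with h1
        have : ((a:ℕ):ℤ) - (b:ℕ) = (S:ℤ)*(d:ℕ) := by linarith [hk]
        have habs : (S:ℤ)*(d:ℕ) ≤ 2*r := by
          have ha' : ((a:ℕ):ℤ) ≤ 2*r := by exact_mod_cast Nat.lt_succ_iff.mp a.isLt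
          have hb' : (0:ℤ) ≤ ((b:ℕ):ℤ) := by positivity
          linarith
        have : S*(d:ℕ) ≤ 2*r := by exact_mod_cast habs
        exact h1 this
      · -- then b - a = S(N-d) ≤ 2r and d ≥ 1
        have hx : ((b:ℕ):ℤ) - (a:ℕ) = (S:ℤ)*(N:ℤ) - (S:ℤ)*(d:ℕ) := by linarith [hk]
        have hd1 : 1 ≤ (d:ℕ) := by
          by_contra hc
          have : (d:ℕ) = 0 := by omega
          rw [this] at hx
          push_cast at hx
          have hb' : ((b:ℕ):ℤ) ≤ 2*r := by exact_mod_cast Nat.lt_succ_iff.mp b.isLt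
          have ha' : (0:ℤ) ≤ ((a:ℕ):ℤ) := by positivity
          have : (4*r+1 : ℤ) ≤ (S:ℤ)*(N:ℤ) := by exact_mod_cast hN
          linarith
        have hsn : ((S*(N-(d:ℕ)) : ℕ) : ℤ) = (S:ℤ)*(N:ℤ) - (S:ℤ)*(d:ℕ) := by
          push_cast [Nat.cast_sub hdN]; ring
        have hle : ((S*(N-(d:ℕ)) : ℕ) : ℤ) ≤ 2*r := by
          rw [hsn, ← hx]
          have hb' : ((b:ℕ):ℤ) ≤ 2*r := by exact_mod_cast Nat.lt_succ_iff.mp b.isLt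
          have ha' : (0:ℤ) ≤ ((a:ℕ):ℤ) := by positivity
          linarith
        exact h2 ⟨hd1, by exact_mod_cast hle⟩

lemma GRO_shift (M C r S N : ℕ) [NeZero (S*N)] [NeZero N]
    (K : Fin M → Fin C → Fin (2*r+1) → ℝ) (m l : Fin M) (i i' : Fin N) :
    ((layerMat M C r S N K * (layerMat M C r S N K)ᵀ - 1 :
        Matrix (Fin M × Fin N) (Fin M × Fin N) ℝ)) (m,i) (l,i')
      = ((layerMat M C r S N K * (layerMat M C r S N K)ᵀ - 1 :
        Matrix (Fin M × Fin N) (Fin M × Fin N) ℝ)) (m,(0:Fin N)) (l, i' - i) := by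
  have hNd : (N:ℤ) ∣ ((((i' - i : Fin N):ℕ):ℤ) - (((i':ℕ):ℤ) - ((i:ℕ):ℤ))) := by
    have h : (i' - i : Fin N) = (((((i':ℕ):ℤ) - ((i:ℕ):ℤ)) : ℤ) : Fin N) := by
      rw [Int.cast_sub, Int.cast_natCast, Int.cast_natCast,
        Fin.cast_val_eq_self, Fin.cast_val_eq_self]
    exact (finEqCast_iff _ _).1 h
  obtain ⟨t, ht⟩ := hNd
  rw [Matrix.sub_apply, Matrix.sub_apply, mulT_apply, mulT_apply,
    Matrix.one_apply, Matrix.one_apply]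
  congr 1
  · refine Finset.sum_congr rfl fun c _ => Finset.sum_congr rfl fun a _ =>
      Finset.sum_congr rfl fun b _ => if_congr ?_ rfl rfl
    rw [finIntCast_eq_iff, finIntCast_eq_iff]
    constructor <;> rintro ⟨k, hk⟩
    · refine ⟨k - t, ?_⟩
      have h0 : ((0 : Fin N):ℕ) = 0 := rfl
      push_cast [h0] at hk ht ⊢
      linear_combination hk - (S:ℤ)*ht
    · refine ⟨k + t, ?_⟩
      have h0 : ((0 : Fin N):ℕ) = 0 := rfl
      push_cast [h0] at hk ht ⊢
      linear_combination hk + (S:ℤ)*ht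
  · refine if_congr ?_ rfl rfl
    rw [Prod.mk.injEq, Prod.mk.injEq]
    constructor
    · rintro ⟨h1, h2⟩; exact ⟨h1, by rw [← h2, sub_self]⟩
    · rintro ⟨h1, h2⟩
      refine ⟨h1, ?_⟩
      have := h2.symm
      rw [sub_eq_zero] at this
      · exact this.symm

lemma frob2_RO (M C r S N : ℕ) [NeZero (S*N)] [NeZero N]
    (K : Fin M → Fin C → Fin (2*r+1) → ℝ) :
    frob2 (layerMat M C r S N K * (layerMat M C r S N K)ᵀ - 1)
      = (N:ℝ) * ∑ m : Fin M, ∑ l : Fin M, ∑ d : Fin N,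
          (((layerMat M C r S N K * (layerMat M C r S N K)ᵀ - 1 :
            Matrix (Fin M × Fin N) (Fin M × Fin N) ℝ)) (m,(0:Fin N)) (l,d))^2 := by
  rw [frob2, Fintype.sum_prod_type]
  have h1 : ∀ (m : Fin M) (i : Fin N),
      (∑ q : Fin M × Fin N,
        (((layerMat M C r S N K * (layerMat M C r S N K)ᵀ - 1 :
          Matrix (Fin M × Fin N) (Fin M × Fin N) ℝ)) (m,i) q)^2)
      = ∑ q : Fin M × Fin N,
        (((layerMat M C r S N K * (layerMat M C r S N K)ᵀ - 1 :
          Matrix (Fin M × Fin N) (Fin M × Fin N) ℝ)) (m,(0:Fin N)) q)^2 := by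
    intro m i
    rw [Fintype.sum_prod_type, Fintype.sum_prod_type]
    refine Finset.sum_congr rfl fun l _ => ?_
    refine Fintype.sum_equiv (Equiv.subRight i) _ _ fun i' => ?_
    rw [GRO_shift]
    rfl
  have h2 : ∀ m : Fin M, (∑ i : Fin N, ∑ q : Fin M × Fin N,
      (((layerMat M C r S N K * (layerMat M C r S N K)ᵀ - 1 :
        Matrix (Fin M × Fin N) (Fin M × Fin N) ℝ)) (m,i) q)^2)
      = (N:ℝ) * ∑ q : Fin M × Fin N,
        (((layerMat M C r S N K * (layerMat M C r S N K)ᵀ - 1 :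
          Matrix (Fin M × Fin N) (Fin M × Fin N) ℝ)) (m,(0:Fin N)) q)^2 := by
    intro m
    rw [Finset.sum_congr rfl (fun i _ => h1 m i), Finset.sum_const, Finset.card_univ,
      Fintype.card_fin, nsmul_eq_mul]
  rw [Finset.sum_congr rfl (fun m _ => h2 m), ← Finset.mul_sum]
  congr 1
  exact Finset.sum_congr rfl fun m _ => Fintype.sum_prod_type _

/-- `N`-independent value of the row sum, RO case. -/
noncomputable def rowValRO (M C r S : ℕ) (K : Fin M → Fin C → Fin (2*r+1) → ℝ) : ℝ :=
  ∑ m : Fin M, ∑ l : Fin M,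
    ((ECorr M C r K m l 0 - if m = l then 1 else 0)^2
     + ∑ x ∈ Finset.filter (fun x => 1 ≤ x ∧ S*x ≤ 2*r) (Finset.range (2*r+1)),
         ((ECorr M C r K m l ((S*x : ℕ)))^2 + (ECorr M C r K m l (-((S*x : ℕ):ℤ)))^2))

lemma rowRO_eq (M C r S N : ℕ) [NeZero (S*N)] [NeZero N] (hN : 4*r+1 ≤ S*N)
    (K : Fin M → Fin C → Fin (2*r+1) → ℝ) :
    (∑ m : Fin M, ∑ l : Fin M, ∑ d : Fin N,
      (((layerMat M C r S N K * (layerMat M C r S N K)ᵀ - 1 :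
        Matrix (Fin M × Fin N) (Fin M × Fin N) ℝ)) (m,(0:Fin N)) (l,d))^2)
      = rowValRO M C r S K := by
  have hS : 0 < S := Nat.pos_of_ne_zero (fun h => NeZero.ne (S*N) (by rw [h, Nat.zero_mul]))
  have hNpos : 0 < N := Nat.pos_of_ne_zero (NeZero.ne N)
  rw [rowValRO]
  refine Finset.sum_congr rfl fun m _ => Finset.sum_congr rfl fun l _ => ?_
  set E : ℤ → ℝ := ECorr M C r K m l with hE
  set F : ℕ → ℝ := fun x =>
    ((if S*x ≤ 2*r then E ((S*x : ℕ)) else 0)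
      + (if 1 ≤ x ∧ S*(N-x) ≤ 2*r then E ((S:ℤ)*(x:ℤ) - (S:ℤ)*(N:ℤ)) else 0)
      - (if m = l ∧ x = 0 then 1 else 0))^2 with hF
  have hFd : ∀ d : Fin N,
      (((layerMat M C r S N K * (layerMat M C r S N K)ᵀ - 1 :
        Matrix (Fin M × Fin N) (Fin M × Fin N) ℝ)) (m,(0:Fin N)) (l,d))^2 = F (d:ℕ) := by
    intro d
    rw [GRO_val M C r S N hN K m l d]
    simp only [hF, hE]
    norm_cast
  rw [Finset.sum_congr rfl (fun d _ => hFd d), Fin.sum_univ_eq_sum_range F N]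
  -- region sets
  set T : Finset ℕ := Finset.filter (fun x => 1 ≤ x ∧ S*x ≤ 2*r) (Finset.range (2*r+1)) with hT
  set T2 : Finset ℕ := Finset.filter (fun x => 1 ≤ x ∧ S*(N-x) ≤ 2*r) (Finset.range N) with hT2
  have hmemT : ∀ x, x ∈ T ↔ (1 ≤ x ∧ S*x ≤ 2*r) := by
    intro x
    rw [hT, Finset.mem_filter, Finset.mem_range]
    constructor
    · rintro ⟨_, h⟩; exact h
    · rintro ⟨h1, h2⟩
      refine ⟨?_, h1, h2⟩
      have : 1*x ≤ S*x := Nat.mul_le_mul_right x hS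
      omega
  have hmemT2 : ∀ x, x ∈ T2 ↔ (1 ≤ x ∧ S*(N-x) ≤ 2*r ∧ x < N) := by
    intro x
    rw [hT2, Finset.mem_filter, Finset.mem_range]
    constructor
    · rintro ⟨h, h1, h2⟩; exact ⟨h1, h2, h⟩
    · rintro ⟨h1, h2, h3⟩; exact ⟨h3, h1, h2⟩
  have hTN : ∀ x ∈ T, x < N := by
    intro x hx
    rw [hmemT] at hx
    have : S*x < S*N := by omega
    exact (Nat.mul_lt_mul_left hS).mp this
  have hdisj : Disjoint T T2 := by
    rw [Finset.disjoint_left]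
    intro x hx hx2
    rw [hmemT] at hx
    rw [hmemT2] at hx2
    have hxN : x ≤ N := le_of_lt hx2.2.2
    have : S*x + S*(N-x) = S*N := by rw [← Nat.mul_add]; congr 1; omega
    omega
  have h0T : (0:ℕ) ∉ T ∪ T2 := by
    rw [Finset.mem_union, hmemT, hmemT2]
    omega
  have hsub : insert 0 (T ∪ T2) ⊆ Finset.range N := by
    intro x hx
    rw [Finset.mem_insert, Finset.mem_union] at hx
    rw [Finset.mem_range]
    rcases hx with rfl | hx | hx
    · exact hNpos
    · exact hTN x hx
    · rw [hmemT2] at hx; exact hx.2.2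
  have hzero : ∀ x ∈ Finset.range N, x ∉ insert 0 (T ∪ T2) → F x = 0 := by
    intro x hxr hx
    rw [Finset.mem_insert, Finset.mem_union, hmemT, hmemT2] at hx
    push_neg at hx
    obtain ⟨hx0, hx1, hx2⟩ := hx
    rw [Finset.mem_range] at hxr
    have h1x : 1 ≤ x := by omega
    have c1 : ¬ (S*x ≤ 2*r) := by have := hx1 h1x; omega
    have c2 : ¬ (1 ≤ x ∧ S*(N-x) ≤ 2*r) := by
      rintro ⟨hh1, hh2⟩; have := hx2 hh1 hh2; omega
    have c3 : ¬ (m = l ∧ x = 0) := by rintro ⟨_, hh⟩; omega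
    rw [hF]
    simp only []
    rw [if_neg c1, if_neg c2, if_neg c3]
    ring
  rw [← Finset.sum_subset hsub (fun x h1 h2 => hzero x h1 h2)]
  rw [Finset.sum_insert h0T, Finset.sum_union hdisj]
  have hF0 : F 0 = (E 0 - if m = l then 1 else 0)^2 := by
    rw [hF]
    simp only []
    rw [if_pos (by omega), if_neg (by omega)]
    norm_num
  have hFT : ∀ x ∈ T, F x = (E ((S*x : ℕ)))^2 := by
    intro x hx
    rw [hmemT] at hx
    have hnd : ¬ (1 ≤ x ∧ S*(N-x) ≤ 2*r) := by
      rintro ⟨h1, h2⟩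
      have hxN : x ≤ N := le_of_lt (hTN x (by rw [hmemT]; exact hx))
      have : S*x + S*(N-x) = S*N := by rw [← Nat.mul_add]; congr 1; omega
      omega
    rw [hF]
    simp only []
    rw [if_pos hx.2, if_neg hnd, if_neg (by omega)]
    ring
  have hFT2 : ∑ x ∈ T2, F x = ∑ x ∈ T, (E (-((S*x : ℕ):ℤ)))^2 := by
    refine Finset.sum_nbij' (fun x => N - x) (fun y => N - y) ?_ ?_ ?_ ?_ ?_
    · intro x hx
      rw [hmemT2] at hx
      rw [hmemT]
      obtain ⟨h1, h2, h3⟩ := hx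
      exact ⟨by omega, h2⟩
    · intro y hy
      rw [hmemT] at hy
      have hyN : y < N := hTN y (by rw [hmemT]; exact hy)
      rw [hmemT2]
      refine ⟨by omega, ?_, by omega⟩
      have hee : N - (N - y) = y := by omega
      rw [hee]; exact hy.2
    · intro x hx; rw [hmemT2] at hx; omega
    · intro y hy
      rw [hmemT] at hy
      have hyN : y < N := hTN y (by rw [hmemT]; exact hy)
      omega
    · intro x hx
      rw [hmemT2] at hx
      obtain ⟨h1, h2, h3⟩ := hx
      have hns : ¬ (S*x ≤ 2*r) := by
        intro hc
        have hxN : x ≤ N := le_of_lt h3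
        have : S*x + S*(N-x) = S*N := by rw [← Nat.mul_add]; congr 1; omega
        omega
      have harg : (S:ℤ)*(x:ℤ) - (S:ℤ)*(N:ℤ) = -((S*(N-x) : ℕ):ℤ) := by
        push_cast [Nat.cast_sub (le_of_lt h3)]
        ring
      rw [hF]
      simp only []
      rw [if_neg hns, if_pos ⟨h1, h2⟩, if_neg (by omega), harg]
      ring
  rw [hF0, Finset.sum_congr rfl hFT, hFT2, ← Finset.sum_add_distrib]

lemma mulTT_apply (M C r S N : ℕ) [NeZero (S*N)] [NeZero N]
    (K : Fin M → Fin C → Fin (2*r+1) → ℝ) (c c' : Fin C) (j j' : Fin (S*N)) :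
    ((layerMat M C r S N K)ᵀ * layerMat M C r S N K) (c,j) (c',j')
      = ∑ m : Fin M, ∑ a : Fin (2*r+1), ∑ b : Fin (2*r+1),
          if ((S:ℤ) ∣ (((j:ℕ):ℤ) + (r:ℤ) - ((a:ℕ):ℤ))) ∧
             (((((j:ℕ):ℤ) - ((a:ℕ):ℤ) : ℤ)) : Fin (S*N))
               = (((((j':ℕ):ℤ) - ((b:ℕ):ℤ) : ℤ)) : Fin (S*N))
          then K m c a * K m c' b else 0 := by
  classical
  have hS : 0 < S := Nat.pos_of_ne_zero (fun h => NeZero.ne (S*N) (by rw [h, Nat.zero_mul]))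
  rw [Matrix.mul_apply, Fintype.sum_prod_type]
  refine Finset.sum_congr rfl fun m _ => ?_
  -- rewrite entries
  have hentry : ∀ (i : Fin N),
      (layerMat M C r S N K)ᵀ (c,j) (m,i) * layerMat M C r S N K (m,i) (c',j')
      = ∑ a : Fin (2*r+1), ∑ b : Fin (2*r+1),
        (if ((S*(i:ℕ) + (a:ℕ) : ℤ) : Fin (S*N)) = (((j:ℕ) + (r:ℕ) : ℤ) : Fin (S*N))
          then K m c a else 0) *
        (if ((S*(i:ℕ) + (b:ℕ) : ℤ) : Fin (S*N)) = (((j':ℕ) + (r:ℕ) : ℤ) : Fin (S*N))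
          then K m c' b else 0) := by
    intro i
    rw [Matrix.transpose_apply, layerMat_apply, layerMat_apply, Finset.sum_mul_sum]
  rw [Finset.sum_congr rfl (fun i _ => hentry i), Finset.sum_comm]
  refine Finset.sum_congr rfl fun a _ => ?_
  rw [Finset.sum_comm]
  refine Finset.sum_congr rfl fun b _ => ?_
  -- now the i-sum
  set v : ℤ := ((j:ℕ):ℤ) + (r:ℤ) - ((a:ℕ):ℤ) with hv
  have hP : ∀ i : Fin N,
      ((((S*(i:ℕ) + (a:ℕ) : ℤ)) : Fin (S*N)) = (((j:ℕ) + (r:ℕ) : ℤ) : Fin (S*N)))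
        ↔ ((S:ℤ) ∣ v ∧ i = ((v / S : ℤ) : Fin N)) := by
    intro i
    rw [finIntCast_eq_iff]
    constructor
    · rintro ⟨k, hk⟩
      have hveq : v = (S:ℤ) * ((i:ℕ) - (N:ℤ)*k) := by push_cast at hk ⊢; linear_combination -hk
      have hdvd : (S:ℤ) ∣ v := ⟨_, hveq⟩
      have hdiv : v / S = ((i:ℕ):ℤ) - (N:ℤ)*k := by
        rw [hveq, Int.mul_ediv_cancel_left _ (by exact_mod_cast hS.ne')]
      refine ⟨hdvd, ?_⟩
      rw [finEqCast_iff, hdiv]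
      exact ⟨k, by ring⟩
    · rintro ⟨⟨w, hw⟩, hi⟩
      rw [hv] at hw
      have hdiv : v / S = w := by
        rw [hv, hw, Int.mul_ediv_cancel_left _ (by exact_mod_cast hS.ne')]
      rw [finEqCast_iff, hdiv] at hi
      obtain ⟨k, hk⟩ := hi
      refine ⟨k, ?_⟩
      push_cast at hk hw ⊢
      linear_combination (S:ℤ)*hk - hw
  by_cases hdvd : (S:ℤ) ∣ v
  · set i₀ : Fin N := ((v / S : ℤ) : Fin N) with hi₀
    have hQ : ((((S*(i₀:ℕ) + (b:ℕ) : ℤ)) : Fin (S*N)) = (((j':ℕ) + (r:ℕ) : ℤ) : Fin (S*N)))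
        ↔ ((((((j:ℕ):ℤ) - ((a:ℕ):ℤ) : ℤ)) : Fin (S*N))
            = (((((j':ℕ):ℤ) - ((b:ℕ):ℤ) : ℤ)) : Fin (S*N))) := by
      have hii : (N:ℤ) ∣ (((i₀:ℕ):ℤ) - v / S) := by
        rw [← finEqCast_iff]
      obtain ⟨w, hw⟩ := hdvd
      rw [hv] at hw
      have hdiv : v / S = w := by
        rw [hv, hw, Int.mul_ediv_cancel_left _ (by exact_mod_cast hS.ne')]
      rw [hdiv] at hii
      obtain ⟨t, ht⟩ := hii
      rw [finIntCast_eq_iff, finIntCast_eq_iff]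
      constructor <;> rintro ⟨k, hk⟩
      · refine ⟨k - t, ?_⟩
        push_cast at hk ht hw ⊢
        linear_combination hk - (S:ℤ)*ht + hw
      · refine ⟨k + t, ?_⟩
        push_cast at hk ht hw ⊢
        linear_combination hk + (S:ℤ)*ht - hw
    rw [Finset.sum_eq_single i₀]
    · rw [if_pos ((hP i₀).2 ⟨hdvd, rfl⟩)]
      rw [mul_ite, mul_zero]
      refine if_congr ?_ rfl rfl
      rw [hQ]
      constructor
      · intro h; exact ⟨hdvd, h⟩
      · intro h; exact h.2
    · intro i _ hne
      rw [if_neg, zero_mul]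
      intro hPi
      exact hne ((hP i).1 hPi).2
    · intro h; exact absurd (Finset.mem_univ _) h
  · rw [if_neg (fun h => hdvd h.1)]
    refine Finset.sum_eq_zero fun i _ => ?_
    rw [if_neg, zero_mul]
    intro hPi
    exact hdvd ((hP i).1 hPi).1

lemma HCO_shift (M C r S N : ℕ) [NeZero (S*N)] [NeZero N]
    (K : Fin M → Fin C → Fin (2*r+1) → ℝ) (c c' : Fin C) (x y s : Fin (S*N))
    (hs : (S:ℤ) ∣ ((s:ℕ):ℤ)) :
    (((layerMat M C r S N K)ᵀ * layerMat M C r S N K - 1 :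
        Matrix (Fin C × Fin (S*N)) (Fin C × Fin (S*N)) ℝ)) (c, x+s) (c', y+s)
      = (((layerMat M C r S N K)ᵀ * layerMat M C r S N K - 1 :
        Matrix (Fin C × Fin (S*N)) (Fin C × Fin (S*N)) ℝ)) (c, x) (c', y) := by
  have hmod : ∀ z : Fin (S*N), ((S*N : ℕ):ℤ) ∣ (((z+s : Fin (S*N)):ℕ):ℤ) - ((z:ℕ) + (s:ℕ)) := by
    intro z
    have h : (z + s : Fin (S*N)) = (((((z:ℕ):ℤ) + ((s:ℕ):ℤ)) : ℤ) : Fin (S*N)) := by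
      rw [Int.cast_add, Int.cast_natCast, Int.cast_natCast,
        Fin.cast_val_eq_self, Fin.cast_val_eq_self]
    have := (finEqCast_iff _ _).1 h
    exact_mod_cast this
  obtain ⟨t, ht⟩ := hmod x
  obtain ⟨t', ht'⟩ := hmod y
  obtain ⟨e, he⟩ := hs
  rw [Matrix.sub_apply, Matrix.sub_apply, mulTT_apply, mulTT_apply,
    Matrix.one_apply, Matrix.one_apply]
  congr 1
  · refine Finset.sum_congr rfl fun m _ => Finset.sum_congr rfl fun a _ =>
      Finset.sum_congr rfl fun b _ => if_congr (and_congr ?_ ?_) rfl rfl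
    · constructor <;> rintro ⟨k, hk⟩
      · refine ⟨k - e - N*t, ?_⟩
        push_cast at hk ht he ⊢
        linear_combination hk - he - ht
      · refine ⟨k + e + N*t, ?_⟩
        push_cast at hk ht he ⊢
        linear_combination hk + he + ht
    · rw [finIntCast_eq_iff, finIntCast_eq_iff]
      constructor <;> rintro ⟨k, hk⟩
      · refine ⟨k - t + t', ?_⟩
        push_cast at hk ht ht' ⊢
        linear_combination hk - ht + ht'
      · refine ⟨k + t - t', ?_⟩
        push_cast at hk ht ht' ⊢
        linear_combination hk + ht - ht'
  · refine if_congr ?_ rfl rfl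
    rw [Prod.mk.injEq, Prod.mk.injEq]
    constructor
    · rintro ⟨h1, h2⟩; exact ⟨h1, add_right_cancel h2⟩
    · rintro ⟨h1, h2⟩; exact ⟨h1, by rw [h2]⟩

lemma frob2_CO (M C r S N : ℕ) [NeZero (S*N)] [NeZero N]
    (K : Fin M → Fin C → Fin (2*r+1) → ℝ) :
    frob2 ((layerMat M C r S N K)ᵀ * layerMat M C r S N K - 1)
      = (N:ℝ) * ∑ w : Fin S, ∑ c : Fin C, ∑ q : Fin C × Fin (S*N),
          ((((layerMat M C r S N K)ᵀ * layerMat M C r S N K - 1 :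
            Matrix (Fin C × Fin (S*N)) (Fin C × Fin (S*N)) ℝ))
              (c, (((w:ℕ) : ℕ) : Fin (S*N))) q)^2 := by
  have hS : 0 < S := Nat.pos_of_ne_zero (fun h => NeZero.ne (S*N) (by rw [h, Nat.zero_mul]))
  set G : Matrix (Fin C × Fin (S*N)) (Fin C × Fin (S*N)) ℝ :=
    (layerMat M C r S N K)ᵀ * layerMat M C r S N K - 1 with hG
  set g : Fin (S*N) → ℝ := fun x => ∑ c : Fin C, ∑ q : Fin C × Fin (S*N), (G (c,x) q)^2 with hg
  have hshift : ∀ (x s : Fin (S*N)), (S:ℤ) ∣ ((s:ℕ):ℤ) → g (x + s) = g x := by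
    intro x s hs
    rw [hg]
    refine Finset.sum_congr rfl fun c _ => ?_
    refine Fintype.sum_equiv
      (Equiv.prodCongr (Equiv.refl (Fin C)) (Equiv.subRight s)) _ _ fun q => ?_
    have hq : G (c, x+s) q = G (c, x) (q.1, q.2 - s) := by
      conv_lhs => rw [show q = (q.1, (q.2 - s) + s) from by rw [sub_add_cancel]]
      exact HCO_shift M C r S N K c q.1 x (q.2 - s) s hs
    rw [hq]
    rfl
  -- bijection Fin N × Fin S ≃ Fin (S*N)
  have hlt : ∀ p : Fin N × Fin S, S*(p.1:ℕ) + (p.2:ℕ) < S*N := by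
    intro p
    have h1 : S*((p.1:ℕ)+1) ≤ S*N := Nat.mul_le_mul_left S (Nat.succ_le_of_lt p.1.isLt)
    have h2 := p.2.isLt
    have h3 : S*((p.1:ℕ)+1) = S*(p.1:ℕ) + S := by ring
    omega
  set f : Fin N × Fin S → Fin (S*N) := fun p => ⟨S*(p.1:ℕ) + (p.2:ℕ), hlt p⟩ with hf
  have hinj : Function.Injective f := by
    intro p q hpq
    rw [hf] at hpq
    simp only [Fin.mk.injEq] at hpq
    have hp : (S*(p.1:ℕ) + (p.2:ℕ))/S = (p.1:ℕ) := by
      rw [Nat.mul_add_div hS, Nat.div_eq_of_lt p.2.isLt, Nat.add_zero]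
    have hq : (S*(q.1:ℕ) + (q.2:ℕ))/S = (q.1:ℕ) := by
      rw [Nat.mul_add_div hS, Nat.div_eq_of_lt q.2.isLt, Nat.add_zero]
    have h1 : (p.1:ℕ) = (q.1:ℕ) := by rw [← hp, ← hq, hpq]
    have h1' : S*(p.1:ℕ) = S*(q.1:ℕ) := by rw [h1]
    have h2 : (p.2:ℕ) = (q.2:ℕ) := by omega
    exact Prod.ext (Fin.ext h1) (Fin.ext h2)
  have hbij : Function.Bijective f := by
    rw [Fintype.bijective_iff_injective_and_card]
    exact ⟨hinj, by simp [mul_comm]⟩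
  have hsum : ∑ x : Fin (S*N), g x = ∑ p : Fin N × Fin S, g (f p) :=
    (Function.Bijective.sum_comp hbij g).symm
  have hfs : ∀ p : Fin N × Fin S, g (f p) = g (((p.2:ℕ) : Fin (S*N))) := by
    intro p
    have hsval : (((S*(p.1:ℕ) : ℕ) : Fin (S*N)) : ℕ) = (S*(p.1:ℕ)) % (S*N) := by
      rw [Fin.val_natCast]
    have hdvd : (S:ℤ) ∣ ((((S*(p.1:ℕ) : ℕ) : Fin (S*N)) : ℕ):ℤ) := by
      rw [hsval]
      have : S ∣ (S*(p.1:ℕ)) % (S*N) :=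
        (Nat.dvd_mod_iff ⟨N, rfl⟩).2 ⟨(p.1:ℕ), rfl⟩
      exact_mod_cast this
    have hadd : f p = (((p.2:ℕ) : Fin (S*N))) + (((S*(p.1:ℕ) : ℕ)) : Fin (S*N)) := by
      rw [← Nat.cast_add]
      apply Fin.ext
      rw [Fin.val_natCast, Nat.mod_eq_of_lt (by have := hlt p; omega)]
      show S*(p.1:ℕ) + (p.2:ℕ) = (p.2:ℕ) + S*(p.1:ℕ)
      omega
    rw [hadd, hshift _ _ hdvd]
  rw [frob2, Fintype.sum_prod_type, Finset.sum_comm]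
  calc ∑ x : Fin (S*N), ∑ c : Fin C, ∑ q : Fin C × Fin (S*N), (G (c,x) q)^2
      = ∑ x : Fin (S*N), g x := rfl
    _ = ∑ p : Fin N × Fin S, g (((p.2:ℕ) : Fin (S*N))) := by
        rw [hsum, Finset.sum_congr rfl (fun p _ => hfs p)]
    _ = ∑ _u : Fin N, ∑ w : Fin S, g (((w:ℕ) : Fin (S*N))) := Fintype.sum_prod_type _
    _ = (N:ℝ) * ∑ w : Fin S, g (((w:ℕ) : Fin (S*N))) := by
        rw [Finset.sum_const, Finset.card_univ, Fintype.card_fin, nsmul_eq_mul]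
    _ = (N:ℝ) * ∑ w : Fin S, ∑ c : Fin C, ∑ q : Fin C × Fin (S*N),
          (G (c, (((w:ℕ):ℕ) : Fin (S*N))) q)^2 := rfl

/-- `N`-independent summand for the CO case. -/
noncomputable def E2 (M C r S : ℕ) (K : Fin M → Fin C → Fin (2*r+1) → ℝ)
    (c c' : Fin C) (w t : ℕ) : ℝ :=
  ∑ m : Fin M, ∑ a : Fin (2*r+1), ∑ b : Fin (2*r+1),
    if ((S:ℤ) ∣ ((w:ℤ) + (r:ℤ) - ((a:ℕ):ℤ))) ∧ (((b:ℕ):ℤ) - ((a:ℕ):ℤ) = (t:ℤ) - 2*(r:ℤ))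
    then K m c a * K m c' b else 0

/-- `N`-independent value of the column sums, CO case. -/
noncomputable def rowValCO (M C r S : ℕ) (K : Fin M → Fin C → Fin (2*r+1) → ℝ) : ℝ :=
  ∑ w : Fin S, ∑ c : Fin C, ∑ c' : Fin C, ∑ t : Fin (4*r+1),
    (E2 M C r S K c c' (w:ℕ) (t:ℕ) - if c = c' ∧ (t:ℕ) = 2*r then 1 else 0)^2

lemma rowCO_eq (M C r S N : ℕ) [NeZero (S*N)] [NeZero N] (hN : 4*r+1 ≤ S*N)
    (K : Fin M → Fin C → Fin (2*r+1) → ℝ) :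
    ∑ w : Fin S, ∑ c : Fin C, ∑ q : Fin C × Fin (S*N),
      ((((layerMat M C r S N K)ᵀ * layerMat M C r S N K - 1 :
        Matrix (Fin C × Fin (S*N)) (Fin C × Fin (S*N)) ℝ))
          (c, (((w:ℕ):ℕ) : Fin (S*N))) q)^2
      = rowValCO M C r S K := by
  have hNpos : 0 < N := Nat.pos_of_ne_zero (NeZero.ne N)
  have hSleSN : S ≤ S*N := Nat.le_mul_of_pos_right S hNpos
  have hSNc : (4*(r:ℤ)+1) ≤ (S:ℤ)*(N:ℤ) := by exact_mod_cast hN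
  rw [rowValCO]
  refine Finset.sum_congr rfl fun w _ => Finset.sum_congr rfl fun c _ => ?_
  rw [Fintype.sum_prod_type]
  refine Finset.sum_congr rfl fun c' _ => ?_
  set G : Matrix (Fin C × Fin (S*N)) (Fin C × Fin (S*N)) ℝ :=
    (layerMat M C r S N K)ᵀ * layerMat M C r S N K - 1 with hG
  set wbar : Fin (S*N) := (((w:ℕ):ℕ) : Fin (S*N)) with hwbar
  have hwval : (wbar:ℕ) = (w:ℕ) := by
    rw [hwbar, Fin.val_natCast, Nat.mod_eq_of_lt (lt_of_lt_of_le w.isLt hSleSN)]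
  set τ : Fin (4*r+1) → Fin (S*N) :=
    fun t => (((((w:ℕ):ℤ) + ((t:ℕ):ℤ) - 2*(r:ℤ)) : ℤ) : Fin (S*N)) with hτ
  have hτval : ∀ t : Fin (4*r+1),
      ((S:ℤ)*(N:ℤ)) ∣ ((((τ t):ℕ):ℤ) - (((w:ℕ):ℤ) + ((t:ℕ):ℤ) - 2*(r:ℤ))) := by
    intro t
    have h := finIntCast_val_dvd (n := S*N) ((((w:ℕ):ℤ) + ((t:ℕ):ℤ) - 2*(r:ℤ)))
    have hcast : ((S*N : ℕ):ℤ) = (S:ℤ)*(N:ℤ) := by push_cast; ring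
    rw [hcast] at h
    exact h
  have hτinj : Function.Injective τ := by
    intro t1 t2 h
    rw [hτ] at h
    dsimp only at h
    rw [finIntCast_eq_iff] at h
    have ht1 := t1.isLt; have ht2 := t2.isLt
    have hz : (((t1:ℕ):ℤ) - ((t2:ℕ):ℤ)) = 0 := by
      refine Int.eq_zero_of_abs_lt_dvd (m := (S:ℤ)*(N:ℤ)) ?_ ?_
      · obtain ⟨k, hk⟩ := h
        refine ⟨k, ?_⟩
        push_cast at hk ⊢
        linear_combination hk
      · rw [abs_lt]
        push_cast
        constructor <;> [linarith [hSNc, (by exact_mod_cast ht1 : ((t1:ℕ):ℤ) < 4*r+1),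
            (by positivity : (0:ℤ) ≤ ((t2:ℕ):ℤ))];
          linarith [hSNc, (by exact_mod_cast ht2 : ((t2:ℕ):ℤ) < 4*r+1),
            (by positivity : (0:ℤ) ≤ ((t1:ℕ):ℤ))]]
    exact Fin.ext (by omega)
  have hwbarτ : wbar = τ ⟨2*r, by omega⟩ := by
    have h1 : τ ⟨2*r, by omega⟩
        = (((((w:ℕ):ℤ) + (((2*r:ℕ)):ℤ) - 2*(r:ℤ)) : ℤ) : Fin (S*N)) := rfl
    rw [h1, show ((((w:ℕ):ℤ) + (((2*r:ℕ)):ℤ) - 2*(r:ℤ)) : ℤ) = ((w:ℕ):ℤ) from by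
      push_cast; ring, Int.cast_natCast, hwbar]
  -- value of G at (c,wbar) (c', y)
  have hmemiff : ∀ y : Fin (S*N), ∀ (a b : Fin (2*r+1)),
      ((((((wbar:ℕ):ℤ) - ((a:ℕ):ℤ)) : ℤ) : Fin (S*N)) = ((((((y:ℕ):ℤ) - ((b:ℕ):ℤ)) : ℤ)) : Fin (S*N)))
      → y = τ ⟨(b:ℕ) + 2*r - (a:ℕ), by have := a.isLt; have := b.isLt; omega⟩ := by
    intro y a b hc
    rw [finIntCast_eq_iff] at hc
    obtain ⟨k, hk⟩ := hc
    rw [hτ]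
    dsimp only
    rw [finEqCast_iff]
    refine ⟨-k, ?_⟩
    have hab : ((((b:ℕ) + 2*r - (a:ℕ) : ℕ)):ℤ) = ((b:ℕ):ℤ) + 2*(r:ℤ) - ((a:ℕ):ℤ) := by
      have := a.isLt
      push_cast [Nat.cast_sub (by omega : (a:ℕ) ≤ (b:ℕ) + 2*r)]
      ring
    rw [hab]
    rw [hwval] at hk
    push_cast at hk ⊢
    linear_combination -hk
  have hout : ∀ y ∈ (Finset.univ : Finset (Fin (S*N))), y ∉ Finset.image τ Finset.univ →
      (G (c,wbar) (c',y))^2 = 0 := by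
    intro y _ hy
    have h1 : G (c,wbar) (c',y) = 0 := by
      rw [hG, Matrix.sub_apply, mulTT_apply, Matrix.one_apply]
      have hδ : ¬ ((c,wbar) = (c',y)) := by
        rintro ⟨⟩
        exact hy (Finset.mem_image.2 ⟨⟨2*r, by omega⟩, Finset.mem_univ _, hwbarτ.symm⟩)
      rw [if_neg hδ, sub_zero]
      refine Finset.sum_eq_zero fun m _ => Finset.sum_eq_zero fun a _ =>
        Finset.sum_eq_zero fun b _ => ?_
      rw [if_neg]
      rintro ⟨_, hc2⟩
      exact hy (Finset.mem_image.2 ⟨_, Finset.mem_univ _, (hmemiff y a b hc2).symm⟩)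
    rw [h1]
    ring
  rw [← Finset.sum_subset (Finset.subset_univ (Finset.image τ Finset.univ)) hout,
    Finset.sum_image (fun t _ t' _ h => hτinj h)]
  refine Finset.sum_congr rfl fun t _ => ?_
  -- G (c,wbar) (c', τ t) = E2 - δ'
  have hGτ : G (c,wbar) (c', τ t) = E2 M C r S K c c' (w:ℕ) (t:ℕ)
      - (if c = c' ∧ (t:ℕ) = 2*r then 1 else 0) := by
    rw [hG, Matrix.sub_apply, mulTT_apply, Matrix.one_apply, E2]
    congr 1
    · refine Finset.sum_congr rfl fun m _ => Finset.sum_congr rfl fun a _ =>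
        Finset.sum_congr rfl fun b _ => if_congr (and_congr ?_ ?_) rfl rfl
      · rw [hwval]
      · rw [finIntCast_eq_iff]
        obtain ⟨u, hu⟩ := hτval t
        have ha := a.isLt; have hb := b.isLt; have ht := t.isLt
        constructor
        · rintro ⟨k, hk⟩
          have : (((b:ℕ):ℤ) - ((a:ℕ):ℤ)) - (((t:ℕ):ℤ) - 2*(r:ℤ)) = 0 := by
            refine Int.eq_zero_of_abs_lt_dvd (m := (S:ℤ)*(N:ℤ)) ⟨k+u, ?_⟩ ?_
            · rw [hwval] at hk
              push_cast at hk hu ⊢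
              linear_combination hk + hu
            · rw [abs_lt]
              have h1 : ((a:ℕ):ℤ) ≤ 2*r := by exact_mod_cast Nat.lt_succ_iff.mp ha
              have h2 : ((b:ℕ):ℤ) ≤ 2*r := by exact_mod_cast Nat.lt_succ_iff.mp hb
              have h3 : ((t:ℕ):ℤ) ≤ 4*r := by exact_mod_cast Nat.lt_succ_iff.mp ht
              have h4 : (0:ℤ) ≤ ((a:ℕ):ℤ) := by positivity
              have h5 : (0:ℤ) ≤ ((b:ℕ):ℤ) := by positivity
              have h6 : (0:ℤ) ≤ ((t:ℕ):ℤ) := by positivity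
              constructor <;> linarith
          linarith [this]
        · intro hbat
          refine ⟨-u, ?_⟩
          rw [hwval]
          push_cast at hu hbat ⊢
          linear_combination -hu + hbat
    · refine if_congr ?_ rfl rfl
      rw [Prod.mk.injEq]
      constructor
      · rintro ⟨h1, h2⟩
        refine ⟨h1, ?_⟩
        -- wbar = τ t ⇒ t = 2r
        rw [hwbarτ] at h2
        have h3 := hτinj h2
        have h4 : (2*r : ℕ) = (t:ℕ) := by
          have h5 := congrArg Fin.val h3
          simpa using h5
        omega
      · rintro ⟨h1, h2⟩
        refine ⟨h1, ?_⟩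
        rw [hwbarτ]
        congr 1
        exact Fin.ext (by show 2*r = (t:ℕ); omega)
  rw [hGτ]


/-- scale invariance of the Frobenius orthogonality error, 1D: for sizes
`N, N'` with `SN ≥ 2k−1` and `SN' ≥ 2k−1`, `(Err^{N'}_F(K))² = (N'/N)·(Err^N_F(K))²`. -/
theorem stmt19 (M C r S N N' : ℕ) [NeZero (S*N)] [NeZero (S*N')]
    (hN : 4*r+1 ≤ S*N) (hN' : 4*r+1 ≤ S*N')
    (K : Fin M → Fin C → Fin (2*r+1) → ℝ) :
    (M ≤ C*S →
      frob2 (layerMat M C r S N' K * (layerMat M C r S N' K)ᵀ - 1)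
        = ((N' : ℝ) / (N : ℝ)) *
            frob2 (layerMat M C r S N K * (layerMat M C r S N K)ᵀ - 1)) ∧
    (C*S ≤ M →
      frob2 ((layerMat M C r S N' K)ᵀ * layerMat M C r S N' K - 1)
        = ((N' : ℝ) / (N : ℝ)) *
            frob2 ((layerMat M C r S N K)ᵀ * layerMat M C r S N K - 1)) := by
  haveI hNz : NeZero N := ⟨fun h => NeZero.ne (S*N) (by rw [h, Nat.mul_zero])⟩
  haveI hNz' : NeZero N' := ⟨fun h => NeZero.ne (S*N') (by rw [h, Nat.mul_zero])⟩
  have hNne : (N:ℝ) ≠ 0 := Nat.cast_ne_zero.2 (NeZero.ne N)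
  constructor
  · intro _
    rw [frob2_RO M C r S N' K, rowRO_eq M C r S N' hN' K,
        frob2_RO M C r S N K, rowRO_eq M C r S N hN K]
    field_simp
  · intro _
    rw [frob2_CO M C r S N' K, rowCO_eq M C r S N' hN' K,
        frob2_CO M C r S N K, rowCO_eq M C r S N hN K]
    field_simp
end
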